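/- Let q ∈ (0,1) and t, s real with the q-Hahn weight W_{t,s}(A, B; C, D) := 1_{A+B=C+D} (s^2/t^2)^{|D|} (s^2/t^2; q)_{|A|-|D|} (t^2; q)_{|D|} / (s^2; q)_{|A|} · q^{Σ_{i<j} D_i(A_j - D_j)} · ∏_{i=1}^n binom(A_i, D_i)_q for compositions A, B, C, D ∈ Z_{≥0}^n, where the weight vanishes unless D_i ≤ A_i for all i. Then for any fixed A, B, the sum over all compositions C, D with A + B = C + D of W_{t,s}(A, B; C, D) equals 1 (assuming (s^2;q)_{|A|} ≠ 0). -/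
import Mathlib


/-- The q-Pochhammer symbol `(x;q)_n = ∏_{i=0}^{n-1} (1 - x q^i)`. -/
noncomputable def qPoch (x q : ℝ) (n : ℕ) : ℝ := ∏ i ∈ Finset.range n, (1 - x * q ^ i)

/-- The q-binomial coefficient `binom(n,m)_q`, vanishing for `m > n`. -/
noncomputable def qBinom (q : ℝ) (n m : ℕ) : ℝ :=
  if m ≤ n then qPoch q q n / (qPoch q q m * qPoch q q (n - m)) else 0

lemma qPoch_succ (x q : ℝ) (n : ℕ) : qPoch x q (n+1) = qPoch x q n * (1 - x * q^n) :=
  Finset.prod_range_succ _ _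

lemma qPoch_zero (x q : ℝ) : qPoch x q 0 = 1 := rfl

lemma qPoch_pos {q : ℝ} (hq0 : 0 < q) (hq1 : q < 1) (n : ℕ) : 0 < qPoch q q n := by
  apply Finset.prod_pos
  intro i _
  have : q * q ^ i ≤ q := by
    nlinarith [pow_le_one₀ (le_of_lt hq0) (le_of_lt hq1) (n := i), pow_pos hq0 i]
  linarith

lemma qBinom_zero {q : ℝ} (hq0 : 0 < q) (hq1 : q < 1) (n : ℕ) : qBinom q n 0 = 1 := by
  rw [qBinom, if_pos (Nat.zero_le n), qPoch_zero, Nat.sub_zero, one_mul,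
    div_self (ne_of_gt (qPoch_pos hq0 hq1 n))]

lemma qBinom_self {q : ℝ} (hq0 : 0 < q) (hq1 : q < 1) (n : ℕ) : qBinom q n n = 1 := by
  rw [qBinom, if_pos le_rfl, Nat.sub_self, qPoch_zero, mul_one,
    div_self (ne_of_gt (qPoch_pos hq0 hq1 n))]

lemma qBinom_eq_zero (q : ℝ) {n m : ℕ} (h : n < m) : qBinom q n m = 0 := by
  simp [qBinom, Nat.not_le.mpr h]

lemma qBinom_pascal {q : ℝ} (hq0 : 0 < q) (hq1 : q < 1) (m k : ℕ) :
    qBinom q (m+1) (k+1) = qBinom q m (k+1) + q^(m-k) * qBinom q m k := by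
  rcases lt_trichotomy k m with hk | hk | hk
  · obtain ⟨r, rfl⟩ : ∃ r, m = k + 1 + r := ⟨m - k - 1, by omega⟩
    have h1 : k + 1 ≤ k + 1 + r := by omega
    have h2 : k + 1 ≤ k + 1 + r + 1 := by omega
    have h3 : k ≤ k + 1 + r := by omega
    rw [qBinom, qBinom, qBinom, if_pos h1, if_pos h2, if_pos h3]
    have e1 : k + 1 + r + 1 - (k + 1) = r + 1 := by omega
    have e2 : k + 1 + r - (k + 1) = r := by omega
    have e3 : k + 1 + r - k = r + 1 := by omega
    rw [e1, e2, e3]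
    rw [show k + 1 + r + 1 = (k + 1 + r) + 1 from rfl, qPoch_succ q q (k+1+r),
      qPoch_succ q q r, qPoch_succ q q k]
    have pm := qPoch_pos hq0 hq1 (k + 1 + r)
    have pk := qPoch_pos hq0 hq1 k
    have pr := qPoch_pos hq0 hq1 r
    have nk : (1 : ℝ) - q * q ^ k ≠ 0 := by
      have := qPoch_pos hq0 hq1 (k+1); rw [qPoch_succ] at this; nlinarith [pk]
    have nr : (1 : ℝ) - q * q ^ r ≠ 0 := by
      have := qPoch_pos hq0 hq1 (r+1); rw [qPoch_succ] at this; nlinarith [pr]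
    have hpow : q ^ (r + 1) * (q * q ^ k) = q * q ^ (k + 1 + r) := by
      rw [← pow_succ', ← pow_succ', ← pow_add]; congr 1; omega
    field_simp
    ring_nf
  · subst hk
    rw [qBinom_self hq0 hq1, qBinom_eq_zero q (Nat.lt_succ_self k), qBinom_self hq0 hq1]
    simp
  · rw [qBinom_eq_zero q (by omega : m + 1 < k + 1), qBinom_eq_zero q (by omega : m < k + 1),
      qBinom_eq_zero q hk]
    ring

lemma onevar {q : ℝ} (hq0 : 0 < q) (hq1 : q < 1) (μ α : ℝ) (m : ℕ) :
    ∑ j ∈ Finset.range (m+1), μ^j * qPoch α q j * qPoch μ q (m - j) * qBinom q m j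
      = qPoch (μ*α) q m := by
  induction m with
  | zero => simp [qPoch_zero, qBinom_zero hq0 hq1]
  | succ m ih =>
    rw [Finset.sum_range_succ']
    have key : ∀ j ∈ Finset.range (m+1),
        μ^(j+1) * qPoch α q (j+1) * qPoch μ q (m + 1 - (j+1)) * qBinom q (m+1) (j+1)
        = (μ^(j+1) * qPoch α q (j+1) * qPoch μ q (m - j) * qBinom q m (j+1))
          + (1 - μ * α * q ^ m) * (μ^j * qPoch α q j * qPoch μ q (m - j) * qBinom q m j)
          - (μ^j * qPoch α q j * qPoch μ q (m + 1 - j) * qBinom q m j) := by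
      intro j hj
      have hjm : j ≤ m := by simpa [Nat.lt_succ_iff] using hj
      obtain ⟨r, rfl⟩ : ∃ r, m = j + r := ⟨m - j, by omega⟩
      rw [qBinom_pascal hq0 hq1 (j + r) j]
      have e1 : j + r + 1 - (j + 1) = r := by omega
      have e2 : j + r + 1 - j = r + 1 := by omega
      have e3 : j + r - j = r := by omega
      rw [e1, e2, e3, qPoch_succ μ q r, qPoch_succ α q j, pow_add]
      ring
    rw [Finset.sum_congr rfl key]
    have e : ∀ j : ℕ, m + 1 - (j + 1) = m - j := fun j => by omega
    set g : ℕ → ℝ := fun j => μ^j * qPoch α q j * qPoch μ q (m + 1 - j) * qBinom q m j with hg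
    have hA : ∀ j ∈ Finset.range (m+1),
        (μ^(j+1) * qPoch α q (j+1) * qPoch μ q (m - j) * qBinom q m (j+1))
          + (1 - μ * α * q ^ m) * (μ^j * qPoch α q j * qPoch μ q (m - j) * qBinom q m j)
          - (μ^j * qPoch α q j * qPoch μ q (m + 1 - j) * qBinom q m j)
        = g (j+1) + (1 - μ * α * q ^ m) * (μ^j * qPoch α q j * qPoch μ q (m - j) * qBinom q m j)
          - g j := by
      intro j hj
      simp only [hg, e]
    rw [Finset.sum_congr rfl hA]
    simp only [sub_eq_add_neg]
    rw [Finset.sum_add_distrib, Finset.sum_add_distrib, ← Finset.mul_sum, ih,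
      Finset.sum_neg_distrib]
    have htel : ∑ j ∈ Finset.range (m+1), g (j+1) = ∑ j ∈ Finset.range (m+1), g j - g 0 := by
      have h2 := Finset.sum_range_succ' g (m+1)
      rw [Finset.sum_range_succ] at h2
      have hgz : g (m+1) = 0 := by
        simp [hg, qBinom_eq_zero q (Nat.lt_succ_self m)]
      rw [hgz, add_zero] at h2
      linarith [h2]
    rw [htel]
    have hf0 : μ ^ 0 * qPoch α q 0 * qPoch μ q (m + 1 - 0) * qBinom q (m+1) 0 = g 0 := by
      simp only [hg]
      rw [qBinom_zero hq0 hq1, qBinom_zero hq0 hq1]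
    rw [hf0, qPoch_succ]
    ring

lemma qVdm {q : ℝ} (hq0 : 0 < q) (hq1 : q < 1) (a b j : ℕ) :
    ∑ d ∈ Finset.range (j+1), q^(d * (b - (j - d))) * qBinom q a d * qBinom q b (j - d)
      = qBinom q (a+b) j := by
  induction a generalizing j with
  | zero =>
    rw [Finset.sum_eq_single_of_mem 0 (Finset.mem_range.mpr (Nat.succ_pos j))]
    · simp [qBinom_zero hq0 hq1]
    · intro d _ hd
      rw [qBinom_eq_zero q (by omega : 0 < d)]
      ring
  | succ a ih =>
    rw [Finset.sum_range_succ']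
    have key : ∀ d ∈ Finset.range j,
        q^((d+1) * (b - (j - (d+1)))) * qBinom q (a+1) (d+1) * qBinom q b (j - (d+1))
        = (q^((d+1) * (b - (j - (d+1)))) * qBinom q a (d+1) * qBinom q b (j - (d+1)))
          + (q^((d+1) * (b - (j - (d+1))) + (a - d)) * qBinom q a d * qBinom q b (j - (d+1))) := by
      intro d hd
      rw [qBinom_pascal hq0 hq1 a d, pow_add]
      ring
    rw [Finset.sum_congr rfl key, Finset.sum_add_distrib]
    have hg : ∑ d ∈ Finset.range j,
        q^((d+1) * (b - (j - (d+1)))) * qBinom q a (d+1) * qBinom q b (j - (d+1))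
        = qBinom q (a+b) j
          - q^(0 * (b - (j - 0))) * qBinom q a 0 * qBinom q b (j - 0) := by
      have h2 := Finset.sum_range_succ'
        (fun d => q^(d * (b - (j - d))) * qBinom q a d * qBinom q b (j - d)) j
      rw [ih j] at h2
      linarith [h2]
    rw [hg]
    rcases Nat.eq_zero_or_pos j with hj0 | hjpos
    · subst hj0
      simp only [Finset.range_zero, Finset.sum_empty, Nat.sub_zero, Nat.zero_sub,
        Nat.zero_mul, pow_zero, one_mul]
      rw [qBinom_zero hq0 hq1, qBinom_zero hq0 hq1, qBinom_zero hq0 hq1,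
        qBinom_zero hq0 hq1, qBinom_zero hq0 hq1]
      ring
    · obtain ⟨j', rfl⟩ : ∃ j', j = j' + 1 := ⟨j - 1, by omega⟩
      have hV : ∀ d ∈ Finset.range (j'+1),
          q^((d+1) * (b - (j' + 1 - (d+1))) + (a - d)) * qBinom q a d * qBinom q b (j' + 1 - (d+1))
          = q^(a + b - j') *
            (q^(d * (b - (j' - d))) * qBinom q a d * qBinom q b (j' - d)) := by
        intro d hd
        have hdj : d ≤ j' := by simpa [Nat.lt_succ_iff] using hd
        have e1 : j' + 1 - (d + 1) = j' - d := by omega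
        rw [e1]
        by_cases hda : d ≤ a
        · by_cases hdb : j' - d ≤ b
          · have e2 : (d+1) * (b - (j' - d)) + (a - d)
                = (a + b - j') + d * (b - (j' - d)) := by
              have hm : (d+1) * (b - (j' - d)) = d * (b - (j' - d)) + (b - (j' - d)) := by
                ring
              rw [hm]
              set p := d * (b - (j' - d))
              omega
            rw [e2, pow_add]
            ring
          · rw [qBinom_eq_zero q (by omega : b < j' - d)]
            ring
        · rw [qBinom_eq_zero q (by omega : a < d)]
          ring
      rw [Finset.sum_congr rfl hV, ← Finset.mul_sum, ih j']
      simp only [Nat.zero_mul, pow_zero, one_mul, Nat.sub_zero, qBinom_zero hq0 hq1]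
      have e3 : a + 1 + b = (a + b) + 1 := by omega
      rw [e3, qBinom_pascal hq0 hq1 (a+b) j']
      ring

def EE {n : ℕ} (A D : Fin n → ℕ) : ℕ :=
  ∑ p ∈ Finset.univ.filter (fun p : Fin n × Fin n => p.1 < p.2), D p.1 * (A p.2 - D p.2)

lemma EE_eq {n : ℕ} (A D : Fin n → ℕ) :
    EE A D = ∑ i, ∑ k, if i < k then D i * (A k - D k) else 0 := by
  rw [EE, Finset.sum_filter, Fintype.sum_prod_type]

lemma EE_cons {n : ℕ} (A : Fin (n+1) → ℕ) (d : ℕ) (D : Fin n → ℕ) :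
    EE A (Fin.cons d D) = d * (∑ i : Fin n, (A i.succ - D i)) + EE (fun i => A i.succ) D := by
  rw [EE_eq, EE_eq]
  simp only [Fin.sum_univ_succ, Fin.cons_zero, Fin.cons_succ, Fin.succ_pos, if_true,
    Fin.not_lt_zero, if_false, Fin.succ_lt_succ_iff, lt_self_iff_false, Finset.mul_sum,
    zero_add, add_zero]

lemma sum_Icc_cons {n : ℕ} (A : Fin (n+1) → ℕ) (f : (Fin (n+1) → ℕ) → ℝ) :
    ∑ D ∈ Finset.Icc 0 A, f D
      = ∑ d ∈ Finset.range (A 0 + 1), ∑ D ∈ Finset.Icc 0 (fun i => A i.succ), f (Fin.cons d D) := by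
  rw [← Finset.sum_product']
  apply Finset.sum_nbij' (i := fun D => ((D 0 : ℕ), fun i : Fin n => D i.succ))
    (j := fun p => Fin.cons p.1 p.2)
  · intro D hD
    rw [Finset.mem_Icc] at hD
    rw [Finset.mem_product, Finset.mem_range, Finset.mem_Icc]
    refine ⟨Nat.lt_succ_of_le (hD.2 0), ?_, fun i => hD.2 i.succ⟩
    intro i; exact Nat.zero_le _
  · intro p hp
    rw [Finset.mem_product, Finset.mem_range, Finset.mem_Icc] at hp
    rw [Finset.mem_Icc]
    refine ⟨fun i => Nat.zero_le _, fun i => ?_⟩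
    refine Fin.cases ?_ ?_ i
    · simpa using Nat.lt_succ_iff.mp hp.1
    · intro j; simpa using hp.2.2 j
  · intro D _
    exact funext (fun i => Fin.cases rfl (fun j => rfl) i)
  · intro p _
    simp
  · intro D _
    congr 1
    exact funext (fun i => (Fin.cases rfl (fun j => rfl) i : _)) |>.symm

lemma MV {q : ℝ} (hq0 : 0 < q) (hq1 : q < 1) (n : ℕ) (A : Fin n → ℕ) (j : ℕ) :
    ∑ D ∈ (Finset.Icc 0 A).filter (fun D => ∑ i, D i = j),
        q^(EE A D) * ∏ i, qBinom q (A i) (D i)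
      = qBinom q (∑ i, A i) j := by
  induction n generalizing j with
  | zero =>
    have hA : A = 0 := Subsingleton.elim _ _
    subst hA
    rw [Finset.Icc_self]
    rcases Nat.eq_zero_or_pos j with hj | hj
    · subst hj
      simp [Finset.filter_singleton, EE, qBinom_zero hq0 hq1]
    · rw [qBinom_eq_zero q (by simpa using hj)]
      simp only [Finset.filter_singleton]
      rw [if_neg (by simp [Finset.univ_eq_empty]; omega)]
      simp
  | succ n ih =>
    rw [Finset.sum_filter, sum_Icc_cons]
    have inner : ∀ d ∈ Finset.range (A 0 + 1),
        (∑ D ∈ Finset.Icc (0 : Fin n → ℕ) (fun i => A i.succ),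
          if (∑ i : Fin (n+1), (Fin.cons d D : Fin (n+1) → ℕ) i) = j then
            q^(EE A (Fin.cons d D)) * ∏ i, qBinom q (A i) ((Fin.cons d D : Fin (n+1) → ℕ) i) else 0)
        = if d ≤ j then
            q^(d * ((∑ i : Fin n, A i.succ) - (j - d))) * qBinom q (A 0) d
              * qBinom q (∑ i : Fin n, A i.succ) (j - d)
          else 0 := by
      intro d _
      by_cases hdj : d ≤ j
      · rw [if_pos hdj]
        have hterm : ∀ D ∈ Finset.Icc (0 : Fin n → ℕ) (fun i => A i.succ),
            (if (∑ i : Fin (n+1), (Fin.cons d D : Fin (n+1) → ℕ) i) = j then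
              q^(EE A (Fin.cons d D)) * ∏ i, qBinom q (A i) ((Fin.cons d D : Fin (n+1) → ℕ) i) else 0)
            = q^(d * ((∑ i : Fin n, A i.succ) - (j - d))) * qBinom q (A 0) d *
              (if (∑ i, D i) = j - d then
                q^(EE (fun i => A i.succ) D) * ∏ i, qBinom q (A i.succ) (D i) else 0) := by
          intro D hD
          rw [Finset.mem_Icc] at hD
          rw [Fin.sum_cons, EE_cons, Fin.prod_univ_succ]
          simp only [Fin.cons_zero, Fin.cons_succ]
          by_cases hDj : d + ∑ i, D i = j
          · rw [if_pos hDj, if_pos (by omega)]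
            have hsub : (∑ i : Fin n, (A i.succ - D i)) = (∑ i : Fin n, A i.succ) - (j - d) := by
              have h1 : (∑ i : Fin n, (A i.succ - D i)) + ∑ i, D i = ∑ i : Fin n, A i.succ := by
                rw [← Finset.sum_add_distrib]
                exact Finset.sum_congr rfl (fun i _ => by
                  have h : D i ≤ A i.succ := hD.2 i; omega)
              omega
            rw [hsub, pow_add]
            ring
          · rw [if_neg hDj, if_neg (by omega)]
            ring
        rw [Finset.sum_congr rfl hterm, ← Finset.mul_sum, ← Finset.sum_filter, ih _ (j - d)]
      · rw [if_neg hdj]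
        apply Finset.sum_eq_zero
        intro D _
        rw [if_neg (by rw [Fin.sum_cons]; omega)]
    rw [Finset.sum_congr rfl inner]
    have hvdm := qVdm hq0 hq1 (A 0) (∑ i : Fin n, A i.succ) j
    rw [Fin.sum_univ_succ]
    rw [← hvdm]
    set g : ℕ → ℝ := fun d => q^(d * ((∑ i : Fin n, A i.succ) - (j - d))) * qBinom q (A 0) d
      * qBinom q (∑ i : Fin n, A i.succ) (j - d) with hgdef
    have h1 : ∑ d ∈ Finset.range (A 0 + 1), (if d ≤ j then g d else 0)
        = ∑ d ∈ Finset.range (A 0 + j + 2), (if d ≤ j then g d else 0) := by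
      apply Finset.sum_subset (Finset.range_subset_range.mpr (by omega))
      intro d _ hd
      rw [Finset.mem_range, not_lt] at hd
      have : qBinom q (A 0) d = 0 := qBinom_eq_zero q (by omega)
      simp only [hgdef, this, mul_zero, zero_mul, ite_self]
    have h2 : ∑ d ∈ Finset.range (j + 1), g d
        = ∑ d ∈ Finset.range (A 0 + j + 2), (if d ≤ j then g d else 0) := by
      have hcongr : ∀ d ∈ Finset.range (j + 1), g d = (if d ≤ j then g d else 0) := by
        intro d hd
        rw [Finset.mem_range] at hd
        rw [if_pos (by omega)]
      rw [Finset.sum_congr rfl hcongr]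
      apply Finset.sum_subset (Finset.range_subset_range.mpr (by omega))
      intro d _ hd
      rw [Finset.mem_range, not_lt] at hd
      exact if_neg (by omega)
    rw [h1, ← h2]

/-- The q-Hahn vertex weight `W_{t,s}(A,B;C,D)` with indicator of the conservation law. -/
noncomputable def qHahnW (q t s : ℝ) {n : ℕ} (A B C D : Fin n → ℕ) : ℝ :=
  if A + B = C + D then
    (s ^ 2 / t ^ 2) ^ (∑ i, D i) *
      (qPoch (s ^ 2 / t ^ 2) q ((∑ i, A i) - (∑ i, D i)) * qPoch (t ^ 2) q (∑ i, D i)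
        / qPoch (s ^ 2) q (∑ i, A i)) *
      q ^ (∑ p ∈ Finset.univ.filter (fun p : Fin n × Fin n => p.1 < p.2),
            D p.1 * (A p.2 - D p.2)) *
      ∏ i, qBinom q (A i) (D i)
  else 0

/-- Stochasticity of the q-Hahn weights: for fixed incoming `A, B`, the sum over outgoing
`C, D` with `A + B = C + D` of `W_{t,s}(A,B;C,D)` equals 1. -/
theorem stmt12 (q t s : ℝ) (hq : q ∈ Set.Ioo (0 : ℝ) 1) (ht : t ≠ 0)
    (n : ℕ) (A B : Fin n → ℕ) (hs : qPoch (s ^ 2) q (∑ i, A i) ≠ 0) :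
    ∑ D ∈ Finset.Icc (0 : Fin n → ℕ) (A + B), qHahnW q t s A B (A + B - D) D = 1 := by
  obtain ⟨hq0, hq1⟩ := hq
  have ht2 : t ^ 2 ≠ 0 := pow_ne_zero 2 ht
  have hW : ∀ D ∈ Finset.Icc (0 : Fin n → ℕ) (A + B),
      qHahnW q t s A B (A + B - D) D
      = (s ^ 2 / t ^ 2) ^ (∑ i, D i) *
          (qPoch (s ^ 2 / t ^ 2) q ((∑ i, A i) - (∑ i, D i)) * qPoch (t ^ 2) q (∑ i, D i)
            / qPoch (s ^ 2) q (∑ i, A i)) *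
          q ^ (EE A D) * ∏ i, qBinom q (A i) (D i) := by
    intro D hD
    rw [Finset.mem_Icc] at hD
    have hcons : A + B = (A + B - D) + D := by
      funext i
      have h2 : D i ≤ (A + B) i := hD.2 i
      simp only [Pi.add_apply, Pi.sub_apply] at *
      omega
    rw [qHahnW, if_pos hcons]
    rfl
  rw [Finset.sum_congr rfl hW]
  have hsub : Finset.Icc (0 : Fin n → ℕ) A ⊆ Finset.Icc 0 (A + B) :=
    Finset.Icc_subset_Icc le_rfl (fun i => by simp only [Pi.add_apply]; omega)
  have hzero : ∀ D ∈ Finset.Icc (0 : Fin n → ℕ) (A + B), D ∉ Finset.Icc (0 : Fin n → ℕ) A →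
      (s ^ 2 / t ^ 2) ^ (∑ i, D i) *
          (qPoch (s ^ 2 / t ^ 2) q ((∑ i, A i) - (∑ i, D i)) * qPoch (t ^ 2) q (∑ i, D i)
            / qPoch (s ^ 2) q (∑ i, A i)) *
          q ^ (EE A D) * ∏ i, qBinom q (A i) (D i) = 0 := by
    intro D _ hD
    rw [Finset.mem_Icc] at hD
    push_neg at hD
    have := hD (fun i => Nat.zero_le _)
    rw [Pi.le_def] at this
    push_neg at this
    obtain ⟨i, hi⟩ := this
    rw [Finset.prod_eq_zero (Finset.mem_univ i) (qBinom_eq_zero q hi)]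
    ring
  rw [← Finset.sum_subset hsub hzero]
  have hmaps : ∀ D ∈ Finset.Icc (0 : Fin n → ℕ) A,
      (∑ i, D i) ∈ Finset.range ((∑ i, A i) + 1) := by
    intro D hD
    rw [Finset.mem_Icc] at hD
    rw [Finset.mem_range, Nat.lt_succ_iff]
    exact Finset.sum_le_sum (fun i _ => hD.2 i)
  rw [← Finset.sum_fiberwise_of_maps_to hmaps]
  have hinner : ∀ j ∈ Finset.range ((∑ i, A i) + 1),
      (∑ D ∈ (Finset.Icc (0 : Fin n → ℕ) A).filter (fun D => ∑ i, D i = j),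
        (s ^ 2 / t ^ 2) ^ (∑ i, D i) *
          (qPoch (s ^ 2 / t ^ 2) q ((∑ i, A i) - (∑ i, D i)) * qPoch (t ^ 2) q (∑ i, D i)
            / qPoch (s ^ 2) q (∑ i, A i)) *
          q ^ (EE A D) * ∏ i, qBinom q (A i) (D i))
      = (s ^ 2 / t ^ 2) ^ j * qPoch (t ^ 2) q j * qPoch (s ^ 2 / t ^ 2) q ((∑ i, A i) - j)
          * qBinom q (∑ i, A i) j / qPoch (s ^ 2) q (∑ i, A i) := by
    intro j _
    have hterm : ∀ D ∈ (Finset.Icc (0 : Fin n → ℕ) A).filter (fun D => ∑ i, D i = j),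
        (s ^ 2 / t ^ 2) ^ (∑ i, D i) *
          (qPoch (s ^ 2 / t ^ 2) q ((∑ i, A i) - (∑ i, D i)) * qPoch (t ^ 2) q (∑ i, D i)
            / qPoch (s ^ 2) q (∑ i, A i)) *
          q ^ (EE A D) * ∏ i, qBinom q (A i) (D i)
        = ((s ^ 2 / t ^ 2) ^ j * qPoch (t ^ 2) q j * qPoch (s ^ 2 / t ^ 2) q ((∑ i, A i) - j)
            / qPoch (s ^ 2) q (∑ i, A i)) * (q ^ (EE A D) * ∏ i, qBinom q (A i) (D i)) := by
      intro D hD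
      rw [Finset.mem_filter] at hD
      rw [hD.2]
      ring
    rw [Finset.sum_congr rfl hterm, ← Finset.mul_sum, MV hq0 hq1 n A j]
    ring
  rw [Finset.sum_congr rfl hinner]
  have hterm2 : ∀ j ∈ Finset.range ((∑ i, A i) + 1),
      (s ^ 2 / t ^ 2) ^ j * qPoch (t ^ 2) q j * qPoch (s ^ 2 / t ^ 2) q ((∑ i, A i) - j)
          * qBinom q (∑ i, A i) j / qPoch (s ^ 2) q (∑ i, A i)
      = ((s ^ 2 / t ^ 2) ^ j * qPoch (t ^ 2) q j * qPoch (s ^ 2 / t ^ 2) q ((∑ i, A i) - j)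
          * qBinom q (∑ i, A i) j) / qPoch (s ^ 2) q (∑ i, A i) := fun j _ => rfl
  rw [Finset.sum_congr rfl hterm2, ← Finset.sum_div]
  have hone := onevar hq0 hq1 (s ^ 2 / t ^ 2) (t ^ 2) (∑ i, A i)
  have hμα : (s ^ 2 / t ^ 2) * t ^ 2 = s ^ 2 := by field_simp
  rw [hμα] at hone
  have hsum : (∑ j ∈ Finset.range ((∑ i, A i) + 1),
      (s ^ 2 / t ^ 2) ^ j * qPoch (t ^ 2) q j * qPoch (s ^ 2 / t ^ 2) q ((∑ i, A i) - j)
        * qBinom q (∑ i, A i) j) = qPoch (s ^ 2) q (∑ i, A i) := by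
    rw [← hone]
  rw [hsum, div_self hs]
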